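/- Under the stated setup and algorithmic hypotheses, the sequences {A^k}, {Z^k}, and {H^k} are bounded: there exists R > 0 such that ‖A^k‖ ≤ R, ‖Z^k‖ ≤ R, and ‖H^k‖ ≤ R for all k ≥ 0. -/

import Mathlib

open Matrix BigOperators Filter Topology

/-- Frobenius norm of a real matrix. -/
noncomputable def frob {m n : ℕ} (W : Matrix (Fin m) (Fin n) ℝ) : ℝ :=
  Real.sqrt (∑ i, ∑ j, (W i j) ^ 2)

/-- Laplacian `L_S = D_S - (|S| + |S|ᵀ)/2` of a square real matrix `S`. -/
noncomputable def lap {n : ℕ} (S : Matrix (Fin n) (Fin n) ℝ) : Matrix (Fin n) (Fin n) ℝ :=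
  Matrix.diagonal (fun i => ∑ j, (|S i j| + |S j i|) / 2)
    - (1 / 2 : ℝ) • (S.map (fun x => |x|) + (S.map (fun x => |x|))ᵀ)

/-- The objective `f(A, Z, H)` of the penalized DGSL model. -/
noncomputable def fObj {n k d : ℕ} (X : Matrix (Fin d) (Fin n) ℝ)
    (W M C : Matrix (Fin n) (Fin n) ℝ) (lam lamZ lamM a1 a2 : ℝ)
    (A Z : Matrix (Fin n) (Fin n) ℝ) (H : Matrix (Fin k) (Fin n) ℝ) : ℝ :=
  (1 / 2) * frob (X - X * A) ^ 2 + (lam / 2) * frob (A - Z) ^ 2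
    + lamZ * (∑ i, ∑ j, |Z i j|)
    + a1 * trace (H * lap Z * Hᵀ) / trace (H * lap C * Hᵀ)
    + a2 * trace (H * (lap W + lamM • lap M) * Hᵀ) / trace (H * lap C * Hᵀ)

/- The alternating scheme minimizes `f` in one block at a time over a set that contains the
current iterate, so `f` never increases along the iterates and stays below its initial value `F`.
Every term of `f` is nonnegative (the trace quotients because a Laplacian is positive
semidefinite: its quadratic form is a weighted sum of squared differences), hence
`λ_Z ‖Z‖₁ ≤ F` and `(λ/2) ‖A - Z‖² ≤ F`, which bound `Z` and then `A`; finally `H` has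
orthonormal rows, so `‖H‖ = √k`. -/

section Laplacian

variable {n : ℕ}

theorem lap_apply (S : Matrix (Fin n) (Fin n) ℝ) (i j : Fin n) :
    lap S i j =
      (if i = j then ∑ l, (|S i l| + |S l i|) / 2 else 0) - (|S i j| + |S j i|) / 2 := by
  simp only [lap, Matrix.sub_apply, diagonal_apply, Matrix.smul_apply, Matrix.add_apply,
    map_apply, transpose_apply, smul_eq_mul]
  ring

theorem lap_isHermitian (S : Matrix (Fin n) (Fin n) ℝ) : (lap S).IsHermitian := by
  ext i j
  simp only [conjTranspose_apply, star_trivial, lap_apply, eq_comm (a := j)]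
  split_ifs with h
  · subst h; rfl
  · ring

theorem dotProduct_lap_mulVec (S : Matrix (Fin n) (Fin n) ℝ) (v : Fin n → ℝ) :
    v ⬝ᵥ (lap S *ᵥ v) = (∑ i, ∑ j, (|S i j| + |S j i|) * (v i - v j) ^ 2) / 4 := by
  set g : Fin n → Fin n → ℝ := fun i j => (|S i j| + |S j i|) / 2 * (v i ^ 2 - v i * v j)
  have hquad : v ⬝ᵥ (lap S *ᵥ v) = ∑ i, ∑ j, g i j := by
    simp only [dotProduct, mulVec, lap_apply, sub_mul, ite_mul, zero_mul,
      Finset.sum_sub_distrib, Finset.sum_ite_eq, Finset.mem_univ, if_true, mul_sub,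
      Finset.mul_sum, Finset.sum_mul]
    simp only [← Finset.sum_sub_distrib, g]
    refine Finset.sum_congr rfl fun i _ => Finset.sum_congr rfl fun j _ => ?_
    ring
  have hpair : ∀ i j, g i j + g j i = (|S i j| + |S j i|) * (v i - v j) ^ 2 / 2 := by
    intro i j; simp only [g]; ring
  have hsymm : ∑ i, ∑ j, g i j = ∑ i, ∑ j, g j i := Finset.sum_comm
  have hsum : ∑ i, ∑ j, g i j + ∑ i, ∑ j, g j i
      = (∑ i, ∑ j, (|S i j| + |S j i|) * (v i - v j) ^ 2) / 2 := by
    simp only [← Finset.sum_add_distrib, hpair, Finset.sum_div]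
  linarith

theorem lap_posSemidef (S : Matrix (Fin n) (Fin n) ℝ) : (lap S).PosSemidef := by
  refine .of_dotProduct_mulVec_nonneg (lap_isHermitian S) fun v => ?_
  rw [star_trivial, dotProduct_lap_mulVec]
  positivity

end Laplacian

theorem trace_mul_mul_transpose_nonneg {m n : Type*} [Fintype m] [Fintype n]
    {P : Matrix n n ℝ} (hP : P.PosSemidef) (H : Matrix m n ℝ) : 0 ≤ trace (H * P * Hᵀ) := by
  simpa only [conjTranspose_eq_transpose_of_trivial] using
    (hP.mul_mul_conjTranspose_same H).trace_nonneg

section Frobenius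

variable {m n : ℕ}

theorem frob_nonneg (A : Matrix (Fin m) (Fin n) ℝ) : 0 ≤ frob A := Real.sqrt_nonneg _

attribute [local instance] Matrix.frobeniusNormedAddCommGroup in
theorem frob_le_frob_sub_add (A Z : Matrix (Fin m) (Fin n) ℝ) :
    frob A ≤ frob (A - Z) + frob Z := by
  have frob_eq_norm : ∀ B : Matrix (Fin m) (Fin n) ℝ, frob B = ‖B‖ := fun B => by
    simp [frob, frobenius_norm_def, Real.sqrt_eq_rpow, Real.norm_eq_abs, sq_abs]
  simpa only [frob_eq_norm, add_comm] using norm_le_norm_add_norm_sub' A Z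

theorem frob_le_sum_abs (A : Matrix (Fin m) (Fin n) ℝ) : frob A ≤ ∑ i, ∑ j, |A i j| := by
  refine Real.sqrt_le_iff.2 ⟨by positivity, ?_⟩
  calc ∑ i, ∑ j, A i j ^ 2 ≤ ∑ i, (∑ j, |A i j|) ^ 2 := by
        refine Finset.sum_le_sum fun i _ => ?_
        simpa only [sq_abs] using
          Finset.sum_sq_le_sq_sum_of_nonneg fun j _ => abs_nonneg (A i j)
    _ ≤ (∑ i, ∑ j, |A i j|) ^ 2 :=
        Finset.sum_sq_le_sq_sum_of_nonneg fun i _ => by positivity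

theorem frob_eq_sqrt_of_mul_transpose_eq_one {H : Matrix (Fin m) (Fin n) ℝ}
    (hH : H * Hᵀ = 1) : frob H = √m := by
  have htrace : ∑ i, ∑ j, H i j ^ 2 = trace (H * Hᵀ) := by
    simp [trace, Matrix.mul_apply, sq]
  rw [frob, htrace, hH, trace_one, Fintype.card_fin]

theorem frob_le_of_coupling_add_sparsity_le {A Z : Matrix (Fin m) (Fin n) ℝ}
    {lam lamZ F : ℝ} (hlam : 0 < lam) (hlamZ : 0 < lamZ)
    (h : lam / 2 * frob (A - Z) ^ 2 + lamZ * ∑ i, ∑ j, |Z i j| ≤ F) :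
    frob Z ≤ F / lamZ ∧ frob A ≤ √(2 * F / lam) + F / lamZ := by
  have hcoupling : 0 ≤ lam / 2 * frob (A - Z) ^ 2 := by positivity
  have hsparsity : 0 ≤ lamZ * ∑ i, ∑ j, |Z i j| := by positivity
  have hZ : frob Z ≤ F / lamZ := by
    rw [le_div_iff₀ hlamZ]
    nlinarith [frob_le_sum_abs Z]
  have hAZ : frob (A - Z) ≤ √(2 * F / lam) := by
    refine Real.le_sqrt_of_sq_le ?_
    rw [le_div_iff₀ hlam]
    linarith
  exact ⟨hZ, (frob_le_frob_sub_add A Z).trans (add_le_add hAZ hZ)⟩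

end Frobenius

theorem coupling_add_sparsity_le_fObj {n k d : ℕ} (X : Matrix (Fin d) (Fin n) ℝ)
    (W M C : Matrix (Fin n) (Fin n) ℝ) {lam lamZ lamM a1 a2 : ℝ}
    (hlamM : 0 ≤ lamM) (ha1 : 0 ≤ a1) (ha2 : 0 ≤ a2)
    (A Z : Matrix (Fin n) (Fin n) ℝ) (H : Matrix (Fin k) (Fin n) ℝ) :
    lam / 2 * frob (A - Z) ^ 2 + lamZ * ∑ i, ∑ j, |Z i j|
      ≤ fObj X W M C lam lamZ lamM a1 a2 A Z H := by
  have hC := trace_mul_mul_transpose_nonneg (lap_posSemidef C) H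
  have hZ := trace_mul_mul_transpose_nonneg (lap_posSemidef Z) H
  have hWM := trace_mul_mul_transpose_nonneg
    ((lap_posSemidef W).add ((lap_posSemidef M).smul hlamM)) H
  have hfit : 0 ≤ (1 / 2 : ℝ) * frob (X - X * A) ^ 2 := by positivity
  have hZterm : 0 ≤ a1 * trace (H * lap Z * Hᵀ) / trace (H * lap C * Hᵀ) := by positivity
  have hWMterm :
      0 ≤ a2 * trace (H * (lap W + lamM • lap M) * Hᵀ) / trace (H * lap C * Hᵀ) := by
    positivity
  unfold fObj
  linarith

theorem antitone_of_alternating_minimization {α β γ δ : Type*} [Preorder δ]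
    (f : α → β → γ → δ) {SZ : Set β} {SH : Set γ} {a : ℕ → α} {z : ℕ → β} {h : ℕ → γ}
    (hz : ∀ t, z t ∈ SZ) (hh : ∀ t, h t ∈ SH)
    (hH : ∀ t, ∀ H ∈ SH, f (a t) (z t) (h (t + 1)) ≤ f (a t) (z t) H)
    (hA : ∀ t A, f (a (t + 1)) (z t) (h (t + 1)) ≤ f A (z t) (h (t + 1)))
    (hZ : ∀ t, ∀ Z ∈ SZ, f (a (t + 1)) (z (t + 1)) (h (t + 1)) ≤ f (a (t + 1)) Z (h (t + 1))) :
    Antitone fun t => f (a t) (z t) (h t) :=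
  antitone_nat_of_succ_le fun t =>
    ((hZ t _ (hz t)).trans (hA t (a t))).trans (hH t _ (hh t))

theorem dgsl_sequences_bounded_general (n k d : ℕ)
    (X : Matrix (Fin d) (Fin n) ℝ) (W M C : Matrix (Fin n) (Fin n) ℝ)
    (lam lamZ lamM a1 a2 : ℝ) (hlam : 0 < lam) (hlamZ : 0 < lamZ)
    (hlamM : 0 < lamM) (ha1 : 0 < a1) (ha2 : 0 < a2)
    (Aseq Zseq : ℕ → Matrix (Fin n) (Fin n) ℝ)
    (Hseq : ℕ → Matrix (Fin k) (Fin n) ℝ)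
    (hZ0 : ∀ i, Zseq 0 i i = 0) (hH0 : Hseq 0 * (Hseq 0)ᵀ = 1)
    (hHstep : ∀ t : ℕ, Hseq (t + 1) * (Hseq (t + 1))ᵀ = 1 ∧
      ∀ H : Matrix (Fin k) (Fin n) ℝ, H * Hᵀ = 1 →
        fObj X W M C lam lamZ lamM a1 a2 (Aseq t) (Zseq t) (Hseq (t + 1))
          ≤ fObj X W M C lam lamZ lamM a1 a2 (Aseq t) (Zseq t) H)
    (hAstep : ∀ (t : ℕ) (A : Matrix (Fin n) (Fin n) ℝ),
      fObj X W M C lam lamZ lamM a1 a2 (Aseq (t + 1)) (Zseq t) (Hseq (t + 1))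
        ≤ fObj X W M C lam lamZ lamM a1 a2 A (Zseq t) (Hseq (t + 1)))
    (hZstep : ∀ t : ℕ, (∀ i, Zseq (t + 1) i i = 0) ∧
      ∀ Z : Matrix (Fin n) (Fin n) ℝ, (∀ i, Z i i = 0) →
        fObj X W M C lam lamZ lamM a1 a2 (Aseq (t + 1)) (Zseq (t + 1)) (Hseq (t + 1))
          ≤ fObj X W M C lam lamZ lamM a1 a2 (Aseq (t + 1)) Z (Hseq (t + 1))) :
    ∃ R : ℝ, 0 < R ∧ ∀ t : ℕ,
      frob (Aseq t) ≤ R ∧ frob (Zseq t) ≤ R ∧ frob (Hseq t) ≤ R := by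
  have hZ : ∀ t, ∀ i, Zseq t i i = 0 := fun t => by cases t; exacts [hZ0, (hZstep _).1]
  have hH : ∀ t, Hseq t * (Hseq t)ᵀ = 1 := fun t => by cases t; exacts [hH0, (hHstep _).1]
  set F := fObj X W M C lam lamZ lamM a1 a2 (Aseq 0) (Zseq 0) (Hseq 0)
  have hdescent : Antitone fun t => fObj X W M C lam lamZ lamM a1 a2 (Aseq t) (Zseq t) (Hseq t) :=
    antitone_of_alternating_minimization _
      (SZ := {Z : Matrix (Fin n) (Fin n) ℝ | ∀ i, Z i i = 0})
      (SH := {H : Matrix (Fin k) (Fin n) ℝ | H * Hᵀ = 1}) hZ hH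
      (fun t => (hHstep t).2) hAstep (fun t => (hZstep t).2)
  have hbound : ∀ t, frob (Zseq t) ≤ F / lamZ ∧ frob (Aseq t) ≤ √(2 * F / lam) + F / lamZ :=
    fun t => frob_le_of_coupling_add_sparsity_le hlam hlamZ <|
      (coupling_add_sparsity_le_fObj X W M C hlamM.le ha1.le ha2.le _ _ _).trans
        (hdescent t.zero_le)
  have hFZ : 0 ≤ F / lamZ := (frob_nonneg (Zseq 0)).trans (hbound 0).1
  have hsqrtF := Real.sqrt_nonneg (2 * F / lam)
  have hsqrtk := Real.sqrt_nonneg (k : ℝ)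
  refine ⟨√k + √(2 * F / lam) + F / lamZ + 1, by positivity, fun t => ⟨?_, ?_, ?_⟩⟩
  · linarith [(hbound t).2]
  · linarith [(hbound t).1]
  · rw [frob_eq_sqrt_of_mul_transpose_eq_one (hH t)]
    linarith

theorem dgsl_sequences_bounded (n k d : ℕ) (hn : 0 < n) (hk : 0 < k) (hd : 0 < d)
    (X : Matrix (Fin d) (Fin n) ℝ) (W M C : Matrix (Fin n) (Fin n) ℝ)
    (lam lamZ lamM a1 a2 : ℝ) (hlam : 0 < lam) (hlamZ : 0 < lamZ)
    (hlamM : 0 < lamM) (ha1 : 0 < a1) (ha2 : 0 < a2)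
    (hC : ∀ H : Matrix (Fin k) (Fin n) ℝ, H * Hᵀ = 1 → 0 < trace (H * lap C * Hᵀ))
    (Aseq Zseq : ℕ → Matrix (Fin n) (Fin n) ℝ)
    (Hseq : ℕ → Matrix (Fin k) (Fin n) ℝ)
    (hZ0 : ∀ i, Zseq 0 i i = 0) (hH0 : Hseq 0 * (Hseq 0)ᵀ = 1)
    (hHstep : ∀ t : ℕ, Hseq (t + 1) * (Hseq (t + 1))ᵀ = 1 ∧
      ∀ H : Matrix (Fin k) (Fin n) ℝ, H * Hᵀ = 1 →
        fObj X W M C lam lamZ lamM a1 a2 (Aseq t) (Zseq t) (Hseq (t + 1))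
          ≤ fObj X W M C lam lamZ lamM a1 a2 (Aseq t) (Zseq t) H)
    (hAstep : ∀ (t : ℕ) (A : Matrix (Fin n) (Fin n) ℝ),
      fObj X W M C lam lamZ lamM a1 a2 (Aseq (t + 1)) (Zseq t) (Hseq (t + 1))
        ≤ fObj X W M C lam lamZ lamM a1 a2 A (Zseq t) (Hseq (t + 1)))
    (hZstep : ∀ t : ℕ, (∀ i, Zseq (t + 1) i i = 0) ∧
      ∀ Z : Matrix (Fin n) (Fin n) ℝ, (∀ i, Z i i = 0) →
        fObj X W M C lam lamZ lamM a1 a2 (Aseq (t + 1)) (Zseq (t + 1)) (Hseq (t + 1))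
          ≤ fObj X W M C lam lamZ lamM a1 a2 (Aseq (t + 1)) Z (Hseq (t + 1))) :
    ∃ R : ℝ, 0 < R ∧ ∀ t : ℕ,
      frob (Aseq t) ≤ R ∧ frob (Zseq t) ≤ R ∧ frob (Hseq t) ≤ R :=
  dgsl_sequences_bounded_general n k d X W M C lam lamZ lamM a1 a2 hlam hlamZ hlamM ha1 ha2 Aseq
    Zseq Hseq hZ0 hH0 hHstep hAstep hZstep
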